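/- Finite model property of QML: if a formula α is not satisfied in some quantum modal structure S (i.e., there is a world of S at which α is not true), then there exists a quantum modal structure S* whose set of worlds is finite and in which α is not satisfied. -/
import Mathlib


/-- Formulas of quantum modal logic: atoms, conjunction, negation, box. -/
inductive Formula : Type
  | atom : ℕ → Formula
  | and  : Formula → Formula → Formula
  | neg  : Formula → Formula
  | box  : Formula → Formula
deriving DecidableEq

/-- A set `X ⊆ W` is `R_Q`-closed. -/
def RQClosed {W : Type} (RQ : W → W → Prop) (X : Set W) : Prop :=
  ∀ i : W, i ∈ X ↔ ∀ j : W, RQ i j → ∃ k : W, RQ j k ∧ k ∈ X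

/-- A quantum modal structure `⟨W, R_Q, R_M, ρ⟩`. -/
structure QMS where
  W : Type
  nonempty : Nonempty W
  RQ : W → W → Prop
  RM : W → W → Prop
  val : ℕ → Set W
  RQ_refl : ∀ i, RQ i i
  RQ_symm : ∀ i j, RQ i j → RQ j i
  RM_forced : ∀ i l, RM i l → ∀ j, RQ i j → RM j l
  val_closed : ∀ p, RQClosed RQ (val p)

/-- Truth of a formula at a world, relative to relations `RQ`, `RM` and valuation `v`. -/
def TruthOn {W : Type} (RQ RM : W → W → Prop) (v : ℕ → Set W) : W → Formula → Prop
  | i, .atom p  => i ∈ v p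
  | i, .and α β => TruthOn RQ RM v i α ∧ TruthOn RQ RM v i β
  | i, .neg α   => ∀ j, RQ i j → ¬ TruthOn RQ RM v j α
  | i, .box α   => ∀ l, RM i l → TruthOn RQ RM v l α

/-- Truth at a world of a quantum modal structure. -/
def Truth (S : QMS) : S.W → Formula → Prop := TruthOn S.RQ S.RM S.val

/-- A set of formulas is admissible: closed under subformulas and containing `¬p`
whenever it contains an atomic formula `p`. -/
def Admissible (Sg : Set Formula) : Prop :=
  (∀ α β, Formula.and α β ∈ Sg → α ∈ Sg ∧ β ∈ Sg) ∧
  (∀ α, Formula.neg α ∈ Sg → α ∈ Sg) ∧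
  (∀ α, Formula.box α ∈ Sg → α ∈ Sg) ∧
  (∀ p, Formula.atom p ∈ Sg → Formula.neg (Formula.atom p) ∈ Sg)

/-- `i ∼ j` : worlds `i` and `j` satisfy the same formulas of `Sg`. -/
def Sim (S : QMS) (Sg : Set Formula) (i j : S.W) : Prop :=
  ∀ α ∈ Sg, (Truth S i α ↔ Truth S j α)

/-- The setoid on worlds induced by an admissible set. -/
def worldSetoid (S : QMS) (Sg : Set Formula) : Setoid S.W where
  r := Sim S Sg
  iseqv := ⟨fun _ _ _ => Iff.rfl,
            fun h α hα => (h α hα).symm,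
            fun h1 h2 α hα => (h1 α hα).trans (h2 α hα)⟩

/-- The set of worlds `W* = W/∼` of the collapse. -/
def CW (S : QMS) (Sg : Set Formula) : Type := Quotient (worldSetoid S Sg)

/-- The equivalence class `[i]` of a world `i`. -/
def cls (S : QMS) (Sg : Set Formula) (i : S.W) : CW S Sg :=
  Quotient.mk (worldSetoid S Sg) i

/-- `R_Q*([i],[j])` iff there exist `i' ∼ i` and `j' ∼ j` with `R_Q(i',j')`. -/
def CRQ (S : QMS) (Sg : Set Formula) (x y : CW S Sg) : Prop :=
  ∃ i j : S.W, cls S Sg i = x ∧ cls S Sg j = y ∧ S.RQ i j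

/-- `R_M*([i],[l])` iff for every `□α ∈ Σ`, `i ⊨ □α` implies `l ⊨ α`. -/
def CRM (S : QMS) (Sg : Set Formula) (x y : CW S Sg) : Prop :=
  ∃ i l : S.W, cls S Sg i = x ∧ cls S Sg l = y ∧
    ∀ α, Formula.box α ∈ Sg → Truth S i (Formula.box α) → Truth S l α

/-- `ρ*(p) = {[i] : i ∈ ρ(p)}` if `p ∈ Σ`, and `ρ*(p) = ∅` otherwise. -/
def CVal (S : QMS) (Sg : Set Formula) (p : ℕ) : Set (CW S Sg) :=
  {x | Formula.atom p ∈ Sg ∧ ∃ i : S.W, cls S Sg i = x ∧ i ∈ S.val p}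

/-- Truth at a world of the collapse `S*`, defined by the same truth clauses
using `R_Q*`, `R_M*`, `ρ*`. -/
def CTruth (S : QMS) (Sg : Set Formula) : CW S Sg → Formula → Prop :=
  TruthOn (CRQ S Sg) (CRM S Sg) (CVal S Sg)

/-- Derivability of sequents `Γ ⊢ Δ` in the sequent calculus of QML. -/
inductive Deriv : Set Formula → Set Formula → Prop
  | ax (α : Formula) : Deriv {α} {α}
  | mem (Γ : Set Formula) (α : Formula) :
      Deriv Γ {Formula.box α, Formula.neg (Formula.box α)}
  | wkn (Γ Δ P Q : Set Formula) : Deriv Γ Δ → Deriv (P ∪ Γ) (Δ ∪ Q)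
  | cut (Γ₁ Γ₂ Δ₁ Δ₂ : Set Formula) (α : Formula) :
      Deriv Γ₁ (insert α Δ₁) → Deriv (insert α Γ₂) Δ₂ → Deriv (Γ₁ ∪ Γ₂) (Δ₁ ∪ Δ₂)
  | andl1 (α β : Formula) (Γ Δ : Set Formula) :
      Deriv (insert α Γ) Δ → Deriv (insert (Formula.and α β) Γ) Δ
  | andl2 (α β : Formula) (Γ Δ : Set Formula) :
      Deriv (insert β Γ) Δ → Deriv (insert (Formula.and α β) Γ) Δ
  | andr (α β : Formula) (Γ Δ : Set Formula) :
      Deriv Γ (insert α Δ) → Deriv Γ (insert β Δ) → Deriv Γ (insert (Formula.and α β) Δ)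
  | negl (α : Formula) (Γ Δ : Set Formula) :
      Deriv Γ (insert α Δ) → Deriv (insert (Formula.neg α) Γ) Δ
  | negr (α : Formula) (Δ : Set Formula) :
      Deriv {α} Δ → Deriv (Formula.neg '' Δ) {Formula.neg α}
  | negnegl (α : Formula) (Γ Δ : Set Formula) :
      Deriv (insert α Γ) Δ → Deriv (insert (Formula.neg (Formula.neg α)) Γ) Δ
  | negnegr (α : Formula) (Γ Δ : Set Formula) :
      Deriv Γ (insert α Δ) → Deriv Γ (insert (Formula.neg (Formula.neg α)) Δ)
  | k (α : Formula) (Γ : Set Formula) :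
      Deriv Γ {α} → Deriv (Formula.box '' Γ) {Formula.box α}

/-- Subformula closure of a formula, also adding `¬p` for every atom `p`. -/
def clo : Formula → Finset Formula
  | .atom p => {.atom p, .neg (.atom p)}
  | .and a b => insert (.and a b) (clo a ∪ clo b)
  | .neg a => insert (.neg a) (clo a)
  | .box a => insert (.box a) (clo a)

lemma mem_clo : ∀ α, α ∈ clo α := by intro α; cases α <;> simp [clo]

lemma clo_and : ∀ γ a b, Formula.and a b ∈ clo γ → a ∈ clo γ ∧ b ∈ clo γ := by
  intro γ
  induction γ with
  | atom p => intro a b h; simp [clo] at h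
  | and c d ihc ihd =>
    intro a b h
    simp only [clo, Finset.mem_insert, Finset.mem_union] at h ⊢
    rcases h with h | h | h
    · obtain ⟨rfl, rfl⟩ : a = c ∧ b = d := by injection h with h1 h2; exact ⟨h1, h2⟩
      exact ⟨Or.inr (Or.inl (mem_clo a)), Or.inr (Or.inr (mem_clo b))⟩
    · exact ⟨Or.inr (Or.inl (ihc a b h).1), Or.inr (Or.inl (ihc a b h).2)⟩
    · exact ⟨Or.inr (Or.inr (ihd a b h).1), Or.inr (Or.inr (ihd a b h).2)⟩
  | neg c ih =>
    intro a b h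
    simp only [clo, Finset.mem_insert] at h ⊢
    rcases h with h | h
    · exact absurd h (by simp)
    · exact ⟨Or.inr (ih a b h).1, Or.inr (ih a b h).2⟩
  | box c ih =>
    intro a b h
    simp only [clo, Finset.mem_insert] at h ⊢
    rcases h with h | h
    · exact absurd h (by simp)
    · exact ⟨Or.inr (ih a b h).1, Or.inr (ih a b h).2⟩

lemma clo_neg : ∀ γ a, Formula.neg a ∈ clo γ → a ∈ clo γ := by
  intro γ
  induction γ with
  | atom p =>
    intro a h
    simp only [clo, Finset.mem_insert, Finset.mem_singleton] at h ⊢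
    rcases h with h | h
    · exact absurd h (by simp)
    · left; injection h
  | and c d ihc ihd =>
    intro a h
    simp only [clo, Finset.mem_insert, Finset.mem_union] at h ⊢
    rcases h with h | h | h
    · exact absurd h (by simp)
    · exact Or.inr (Or.inl (ihc a h))
    · exact Or.inr (Or.inr (ihd a h))
  | neg c ih =>
    intro a h
    simp only [clo, Finset.mem_insert] at h ⊢
    rcases h with h | h
    · obtain rfl : a = c := by injection h
      exact Or.inr (mem_clo a)
    · exact Or.inr (ih a h)
  | box c ih =>
    intro a h
    simp only [clo, Finset.mem_insert] at h ⊢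
    rcases h with h | h
    · exact absurd h (by simp)
    · exact Or.inr (ih a h)

lemma clo_box : ∀ γ a, Formula.box a ∈ clo γ → a ∈ clo γ := by
  intro γ
  induction γ with
  | atom p => intro a h; simp [clo] at h
  | and c d ihc ihd =>
    intro a h
    simp only [clo, Finset.mem_insert, Finset.mem_union] at h ⊢
    rcases h with h | h | h
    · exact absurd h (by simp)
    · exact Or.inr (Or.inl (ihc a h))
    · exact Or.inr (Or.inr (ihd a h))
  | neg c ih =>
    intro a h
    simp only [clo, Finset.mem_insert] at h ⊢
    rcases h with h | h
    · exact absurd h (by simp)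
    · exact Or.inr (ih a h)
  | box c ih =>
    intro a h
    simp only [clo, Finset.mem_insert] at h ⊢
    rcases h with h | h
    · obtain rfl : a = c := by injection h
      exact Or.inr (mem_clo a)
    · exact Or.inr (ih a h)

lemma clo_atom : ∀ γ p, Formula.atom p ∈ clo γ → Formula.neg (Formula.atom p) ∈ clo γ := by
  intro γ
  induction γ with
  | atom q =>
    intro p h
    simp only [clo, Finset.mem_insert, Finset.mem_singleton] at h ⊢
    rcases h with h | h
    · obtain rfl : p = q := by injection h
      exact Or.inr rfl
    · exact absurd h (by simp)
  | and c d ihc ihd =>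
    intro p h
    simp only [clo, Finset.mem_insert, Finset.mem_union] at h ⊢
    rcases h with h | h | h
    · exact absurd h (by simp)
    · exact Or.inr (Or.inl (ihc p h))
    · exact Or.inr (Or.inr (ihd p h))
  | neg c ih =>
    intro p h
    simp only [clo, Finset.mem_insert] at h ⊢
    rcases h with h | h
    · exact absurd h (by simp)
    · exact Or.inr (ih p h)
  | box c ih =>
    intro p h
    simp only [clo, Finset.mem_insert] at h ⊢
    rcases h with h | h
    · exact absurd h (by simp)
    · exact Or.inr (ih p h)

lemma clo_admissible (γ : Formula) : Admissible (↑(clo γ) : Set Formula) := by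
  refine ⟨?_, ?_, ?_, ?_⟩ <;> intro a <;> simp only [Finset.mem_coe]
  · exact fun b h => clo_and γ a b h
  · exact clo_neg γ a
  · exact clo_box γ a
  · exact clo_atom γ a

lemma cls_eq_iff (S : QMS) (Sg : Set Formula) (i j : S.W) :
    cls S Sg i = cls S Sg j ↔ Sim S Sg i j :=
  ⟨fun h => Quotient.exact h, fun h => Quotient.sound h⟩

lemma exists_rep' (S : QMS) (Sg : Set Formula) (x : CW S Sg) :
    ∃ i : S.W, cls S Sg i = x := Quotient.exists_rep x

/-- Collapse relation `R_Q*` is reflexive. -/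
lemma CRQ_refl (S : QMS) (Sg : Set Formula) (x : CW S Sg) : CRQ S Sg x x := by
  obtain ⟨i, rfl⟩ := exists_rep' S Sg x
  exact ⟨i, i, rfl, rfl, S.RQ_refl i⟩

lemma CRQ_symm (S : QMS) (Sg : Set Formula) (x y : CW S Sg) (h : CRQ S Sg x y) :
    CRQ S Sg y x := by
  obtain ⟨i, j, hi, hj, hij⟩ := h
  exact ⟨j, i, hj, hi, S.RQ_symm i j hij⟩

/-- `R_M*` is forced by `R_Q*`. -/
lemma CRM_forced (S : QMS) (Sg : Set Formula) (x y : CW S Sg) (h : CRM S Sg x y)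
    (z : CW S Sg) (hq : CRQ S Sg x z) : CRM S Sg z y := by
  obtain ⟨i, l, hi, hl, hP⟩ := h
  obtain ⟨i', j, hi', hj, hij⟩ := hq
  refine ⟨j, l, hj, hl, fun β hβ hjb => ?_⟩
  have hsim : Sim S Sg i' i := (cls_eq_iff S Sg i' i).1 (hi'.trans hi.symm)
  have hi'b : Truth S i' (Formula.box β) := fun m hm =>
    hjb m (S.RM_forced i' m hm j hij)
  exact hP β hβ ((hsim _ hβ).1 hi'b)

/-- `ρ*` is `R_Q*`-closed. -/
lemma CVal_closed (S : QMS) (Sg : Set Formula) (hAdm : Admissible Sg) (p : ℕ) :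
    RQClosed (CRQ S Sg) (CVal S Sg p) := by
  intro x
  constructor
  · rintro ⟨hp, i, hix, hival⟩ y ⟨i', j, hi', hj, hij⟩
    have hsim : Sim S Sg i i' := (cls_eq_iff S Sg i i').1 (hix.trans hi'.symm)
    have hi'val : i' ∈ S.val p := (hsim _ hp).1 hival
    obtain ⟨k, hjk, hkval⟩ := (S.val_closed p i').1 hi'val j hij
    exact ⟨cls S Sg k, ⟨j, k, hj, rfl, hjk⟩, hp, k, rfl, hkval⟩
  · intro hall
    obtain ⟨i, rfl⟩ := exists_rep' S Sg x
    obtain ⟨z, hz, hp, m, hm, hmval⟩ := hall (cls S Sg i) (CRQ_refl S Sg _)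
    refine ⟨hp, i, rfl, ?_⟩
    refine (S.val_closed p i).2 (fun j hij => ?_)
    obtain ⟨z', hz', hp', m', hm', hm'val⟩ := hall (cls S Sg j) ⟨i, j, rfl, rfl, hij⟩
    obtain ⟨j', k', hj', hk', hj'k'⟩ := hz'
    have hsimj : Sim S Sg j j' := (cls_eq_iff S Sg j j').1 hj'.symm
    have hsimk : Sim S Sg k' m' := (cls_eq_iff S Sg k' m').1 (hk'.trans hm'.symm)
    have hk'val : k' ∈ S.val p := (hsimk _ hp').2 hm'val
    -- j' does not satisfy ¬p, hence neither does j
    have hnp : Formula.neg (Formula.atom p) ∈ Sg := hAdm.2.2.2 p hp'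
    have hj'notneg : ¬ Truth S j' (Formula.neg (Formula.atom p)) := fun hneg =>
      hneg k' hj'k' hk'val
    have hjnotneg : ¬ Truth S j (Formula.neg (Formula.atom p)) := fun hneg =>
      hj'notneg ((hsimj _ hnp).1 hneg)
    by_contra hcon
    push_neg at hcon
    exact hjnotneg (fun k hjk hkp => hcon k hjk hkp)

/-- The truth lemma for the collapse. -/
lemma truth_lemma (S : QMS) (Sg : Set Formula) (hAdm : Admissible Sg) :
    ∀ β ∈ Sg, ∀ i : S.W, (CTruth S Sg (cls S Sg i) β ↔ Truth S i β) := by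
  intro β
  induction β with
  | atom p =>
    intro hp i
    constructor
    · rintro ⟨_, i', hi', hval⟩
      exact ((cls_eq_iff S Sg i' i).1 hi' _ hp).1 hval
    · intro h
      exact ⟨hp, i, rfl, h⟩
  | and a b iha ihb =>
    intro hab i
    obtain ⟨ha, hb⟩ := hAdm.1 a b hab
    exact and_congr (iha ha i) (ihb hb i)
  | neg a ih =>
    intro hna i
    have ha : a ∈ Sg := hAdm.2.1 a hna
    constructor
    · intro h j hij
      have := h (cls S Sg j) ⟨i, j, rfl, rfl, hij⟩
      exact fun ht => this ((ih ha j).2 ht)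
    · rintro h y ⟨i', j, hi', hj, hij⟩ hcy
      have hsim : Sim S Sg i i' := (cls_eq_iff S Sg i i').1 hi'.symm
      have hnegi' : Truth S i' (Formula.neg a) := (hsim _ hna).1 h
      have : CTruth S Sg (cls S Sg j) a := hj ▸ hcy
      exact hnegi' j hij ((ih ha j).1 this)
  | box a ih =>
    intro hba i
    have ha : a ∈ Sg := hAdm.2.2.1 a hba
    constructor
    · intro h l hil
      exact (ih ha l).1 (h (cls S Sg l) ⟨i, l, rfl, rfl, fun γ hγ hbox => hbox l hil⟩)
    · rintro h y ⟨i', l, hi', hl, hP⟩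
      have hsim : Sim S Sg i i' := (cls_eq_iff S Sg i i').1 hi'.symm
      have hboxi' : Truth S i' (Formula.box a) := (hsim _ hba).1 h
      have hla : Truth S l a := hP a hba hboxi'
      exact hl ▸ ((ih ha l).2 hla)

/-- The collapse has finitely many worlds when `Sg` comes from a finite closure. -/
lemma CW_finite (S : QMS) (γ : Formula) : Finite (CW S (↑(clo γ) : Set Formula)) := by
  set Sg : Set Formula := ↑(clo γ)
  let g : CW S Sg → ({β // β ∈ clo γ} → Prop) :=
    Quotient.lift (fun i β => Truth S i β.1)
      (fun i j hij => by
        funext β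
        exact propext (hij β.1 (Finset.mem_coe.2 β.2)))
  have hinj : Function.Injective g := by
    intro x y hxy
    obtain ⟨i, rfl⟩ := Quotient.exists_rep x
    obtain ⟨j, rfl⟩ := Quotient.exists_rep y
    refine Quotient.sound (fun β hβ => ?_)
    have := congrFun hxy ⟨β, Finset.mem_coe.1 hβ⟩
    exact iff_of_eq this
  exact Finite.of_injective g hinj

/-- Finite model property of QML. -/
theorem finite_model_property (S : QMS) (α : Formula)
    (h : ∃ i : S.W, ¬ Truth S i α) :
    ∃ T : QMS, Finite T.W ∧ ∃ i : T.W, ¬ Truth T i α := by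
  obtain ⟨i0, hi0⟩ := h
  set Sg : Set Formula := ↑(clo α) with hSg
  have hAdm : Admissible Sg := clo_admissible α
  have hα : α ∈ Sg := Finset.mem_coe.2 (mem_clo α)
  refine ⟨⟨CW S Sg, ⟨cls S Sg i0⟩, CRQ S Sg, CRM S Sg, CVal S Sg,
      CRQ_refl S Sg, CRQ_symm S Sg, CRM_forced S Sg, CVal_closed S Sg hAdm⟩,
    CW_finite S α, cls S Sg i0, ?_⟩
  intro hT
  exact hi0 ((truth_lemma S Sg hAdm α hα i0).1 hT)
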